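/- arXiv:0805.0633 — 10 statements merged into one kernel-verified Lean document; each statement's English description precedes it below -/
import Mathlib

section
/- Let X be a complex Banach space, H : ℝ → (X →L[ℂ] X) a continuous family of bounded operators, and U : ℝ → (X →L[ℂ] X) a differentiable family of bounded operators satisfying i·U'(t) = H(t) ∘ U(t) for all t, with U(0) = I. Let V : ℝ → (X →L[ℂ] X) be continuous with U(t) ∘ V(t) = V(t) ∘ U(t) = I for all t. Let F : ℝ → X → X be continuous (jointly), let ψ₀ ∈ X, and let ψ : ℝ → X be a continuous function satisfying the integral equation ψ(t) = U(t)ψ₀ − i·∫₀ᵗ U(t)(V(s)(F(s, ψ(s)))) ds for all t. Then ψ is differentiable, ψ(0) = ψ₀, and i·ψ'(t) − H(t)ψ(t) = F(t, ψ(t)) for all t. -/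
/-!
Since `U t` is continuous linear it commutes with the integral, so
`ψ t = U t (ψ₀ - i ∫₀ᵗ V s (F s (ψ s)) ds)`. The product rule, `i U' = H U` and `U V = I` then give
`i ψ' t = H t (ψ t) + F t (ψ t)`, and `U 0 = I` gives the initial value.
-/

open MeasureTheory intervalIntegral

theorem HasDerivAt.clm_apply_of_restrictScalars {𝕜 𝕜' E F : Type*} [NontriviallyNormedField 𝕜]
    [NontriviallyNormedField 𝕜'] [NormedAlgebra 𝕜 𝕜'] [NormedAddCommGroup E] [NormedSpace 𝕜' E]
    [NormedSpace 𝕜 E] [IsScalarTower 𝕜 𝕜' E] [NormedAddCommGroup F] [NormedSpace 𝕜' F]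
    [NormedSpace 𝕜 F] [IsScalarTower 𝕜 𝕜' F]
    {U : 𝕜 → E →L[𝕜'] F} {U' : E →L[𝕜'] F} {g : 𝕜 → E} {g' : E} {t : 𝕜}
    (hU : HasDerivAt U U' t) (hg : HasDerivAt g g' t) :
    HasDerivAt (fun u => U u (g u)) (U' (g t) + U t g') t :=
  (((ContinuousLinearMap.restrictScalarsL 𝕜' E F 𝕜 𝕜).hasFDerivAt.comp_hasDerivAt t hU).clm_apply
    hg :)

theorem hasDerivAt_duhamel {X : Type*} [NormedAddCommGroup X] [NormedSpace ℂ X]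
    [CompleteSpace X] {H U U' V : ℝ → X →L[ℂ] X}
    (hU : ∀ t, HasDerivAt U (U' t) t)
    (hHU : ∀ t, Complex.I • U' t = (H t).comp (U t))
    (hUV : ∀ t, (U t).comp (V t) = ContinuousLinearMap.id ℂ X)
    {G : ℝ → X} (hVG : Continuous fun s => V s (G s)) {ψ₀ : X} {ψ : ℝ → X}
    (hψ : ∀ t, ψ t = U t (ψ₀ - Complex.I • ∫ s in (0:ℝ)..t, V s (G s))) (t : ℝ) :
    HasDerivAt ψ (-Complex.I • (H t (ψ t) + G t)) t := by
  obtain rfl : ψ = _ := funext hψ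
  have hU' : U' t = -Complex.I • (H t).comp (U t) := by
    rw [← hHU, smul_smul]
    simp
  have hUV' : U t (V t (G t)) = G t := by
    simpa using congrArg (fun L : X →L[ℂ] X => L (G t)) (hUV t)
  have hint : HasDerivAt (fun t => ψ₀ - Complex.I • ∫ s in (0:ℝ)..t, V s (G s))
      (-(Complex.I • V t (G t))) t :=
    ((hVG.integral_hasStrictDerivAt 0 t).hasDerivAt.const_smul Complex.I).const_sub ψ₀
  convert (hU t).clm_apply_of_restrictScalars hint using 1
  rw [hU', map_neg, map_smul, hUV', smul_apply, ContinuousLinearMap.comp_apply, neg_smul,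
    neg_smul, smul_add, neg_add]

theorem duhamel_principle_general {X : Type*} [NormedAddCommGroup X] [NormedSpace ℂ X]
    [CompleteSpace X]
    (H : ℝ → X →L[ℂ] X)
    (U U' : ℝ → X →L[ℂ] X)
    (hU : ∀ t : ℝ, HasDerivAt U (U' t) t)
    (hHU : ∀ t : ℝ, Complex.I • U' t = (H t).comp (U t))
    (hU0 : U 0 = ContinuousLinearMap.id ℂ X)
    (V : ℝ → X →L[ℂ] X) (hV : Continuous V)
    (hUV : ∀ t : ℝ, (U t).comp (V t) = ContinuousLinearMap.id ℂ X)
    (F : ℝ → X → X) (hF : Continuous fun p : ℝ × X => F p.1 p.2)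
    (ψ₀ : X) (ψ : ℝ → X) (hψ : Continuous ψ)
    (heq : ∀ t : ℝ,
      ψ t = U t ψ₀ - Complex.I • ∫ s in (0:ℝ)..t, U t (V s (F s (ψ s)))) :
    (∀ t : ℝ, DifferentiableAt ℝ ψ t) ∧ ψ 0 = ψ₀ ∧
      ∀ t : ℝ, Complex.I • deriv ψ t - H t (ψ t) = F t (ψ t) := by
  have hVF : Continuous fun s => V s (F s (ψ s)) :=
    hV.clm_apply (hF.comp (continuous_id.prodMk hψ))
  have hψ' (t : ℝ) : HasDerivAt ψ (-Complex.I • (H t (ψ t) + F t (ψ t))) t := by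
    refine hasDerivAt_duhamel hU hHU hUV hVF (ψ₀ := ψ₀) (fun t => ?_) t
    rw [heq t, map_sub, map_smul, (U t).intervalIntegral_comp_comm (hVF.intervalIntegrable 0 t)]
  refine ⟨fun t => (hψ' t).differentiableAt, by simp [heq 0, hU0], fun t => ?_⟩
  rw [(hψ' t).deriv, smul_smul, mul_neg, Complex.I_mul_I, neg_neg, one_smul, add_sub_cancel_left]

/-- Duhamel's principle: a continuous solution of the integral equation
`ψ(t) = U(t)ψ₀ − i·∫₀ᵗ U(t)(V(s)(F(s, ψ(s)))) ds` is differentiable, attains the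
initial value `ψ₀` at `t = 0`, and solves the nonlinear Schrödinger equation
`i·ψ'(t) − H(t)ψ(t) = F(t, ψ(t))`. -/
theorem duhamel_principle {X : Type*} [NormedAddCommGroup X] [NormedSpace ℂ X]
    [CompleteSpace X]
    (H : ℝ → X →L[ℂ] X) (hH : Continuous H)
    (U U' : ℝ → X →L[ℂ] X)
    (hU : ∀ t : ℝ, HasDerivAt U (U' t) t)
    (hHU : ∀ t : ℝ, Complex.I • U' t = (H t).comp (U t))
    (hU0 : U 0 = ContinuousLinearMap.id ℂ X)
    (V : ℝ → X →L[ℂ] X) (hV : Continuous V)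
    (hUV : ∀ t : ℝ, (U t).comp (V t) = ContinuousLinearMap.id ℂ X)
    (hVU : ∀ t : ℝ, (V t).comp (U t) = ContinuousLinearMap.id ℂ X)
    (F : ℝ → X → X) (hF : Continuous fun p : ℝ × X => F p.1 p.2)
    (ψ₀ : X) (ψ : ℝ → X) (hψ : Continuous ψ)
    (heq : ∀ t : ℝ,
      ψ t = U t ψ₀ - Complex.I • ∫ s in (0:ℝ)..t, U t (V s (F s (ψ s)))) :
    (∀ t : ℝ, DifferentiableAt ℝ ψ t) ∧ ψ 0 = ψ₀ ∧
      ∀ t : ℝ, Complex.I • deriv ψ t - H t (ψ t) = F t (ψ t) :=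
  duhamel_principle_general H U U' hU hHU hU0 V hV hUV F hF ψ₀ ψ hψ heq
end

section
/- Let a, b, c, d, f, g : ℝ → ℝ be given coefficient functions and let α, β, γ, δ, ε, κ : ℝ → ℝ be differentiable on an open interval J. Define S(x, y, t) = α(t)x² + β(t)xy + γ(t)y² + δ(t)x + ε(t)y + κ(t). Then S satisfies the Hamilton–Jacobi type equation ∂S/∂t = −a(t)(∂S/∂x)² − b(t)x² + f(t)x + (g(t) − c(t)x)·∂S/∂x for all real x, y and all t ∈ J if and only if on J the following system of ordinary differential equations holds: α' + b + 2cα + 4aα² = 0; β' + (c + 4aα)β = 0; γ' + aβ² = 0; δ' + (c + 4aα)δ = f + 2αg; ε' = (g − 2aδ)β; κ' = gδ − aδ². -/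
/-!
Both sides of the Hamilton–Jacobi equation are polynomials of degree at most two in `(x, y)`
whose coefficients are functions of `t`, so the equation holds for all `x, y` exactly when the
six coefficients of their difference vanish; these six conditions are the ODE system.
-/

theorem forall_quadratic_eq_zero_iff {K : Type*} [Field K] [CharZero K] {A B C D E F : K} :
    (∀ x y : K, A * x ^ 2 + B * (x * y) + C * y ^ 2 + D * x + E * y + F = 0) ↔
      A = 0 ∧ B = 0 ∧ C = 0 ∧ D = 0 ∧ E = 0 ∧ F = 0 := by
  refine ⟨fun h => ?_, ?_⟩
  · have hF : F = 0 := by simpa using h 0 0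
    have two_mul_eq_zero {u : K} (hu : 2 * u = 0) : u = 0 :=
      (mul_eq_zero.1 hu).resolve_left two_ne_zero
    have hA : A = 0 := two_mul_eq_zero <| by linear_combination h 1 0 + h (-1) 0 - 2 * hF
    have hD : D = 0 := two_mul_eq_zero <| by linear_combination h 1 0 - h (-1) 0
    have hC : C = 0 := two_mul_eq_zero <| by linear_combination h 0 1 + h 0 (-1) - 2 * hF
    have hE : E = 0 := two_mul_eq_zero <| by linear_combination h 0 1 - h 0 (-1)
    have hB : B = 0 := by linear_combination h 1 1 - h 1 0 - h 0 1 + hF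
    exact ⟨hA, hB, hC, hD, hE, hF⟩
  · rintro ⟨rfl, rfl, rfl, rfl, rfl, rfl⟩ x y
    ring

section
variable {𝕜 : Type*} [NontriviallyNormedField 𝕜]

theorem HasDerivAt.quadratic_coeffs {α β γ δ ε κ : 𝕜 → 𝕜} {α' β' γ' δ' ε' κ' t : 𝕜}
    (hα : HasDerivAt α α' t) (hβ : HasDerivAt β β' t) (hγ : HasDerivAt γ γ' t)
    (hδ : HasDerivAt δ δ' t) (hε : HasDerivAt ε ε' t) (hκ : HasDerivAt κ κ' t) (x y : 𝕜) :
    HasDerivAt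
      (fun t => α t * x ^ 2 + β t * (x * y) + γ t * y ^ 2 + δ t * x + ε t * y + κ t)
      (α' * x ^ 2 + β' * (x * y) + γ' * y ^ 2 + δ' * x + ε' * y + κ') t :=
  (((((hα.mul_const _).add (hβ.mul_const _)).add (hγ.mul_const _)).add
    (hδ.mul_const _)).add (hε.mul_const _)).add hκ

theorem deriv_quadratic_fst (A B C D E F x y : 𝕜) :
    deriv (fun x => A * x ^ 2 + B * (x * y) + C * y ^ 2 + D * x + E * y + F) x =
      2 * A * x + B * y + D := by
  have hsq : HasDerivAt (fun x => x ^ 2) (2 * x) x := by simpa using hasDerivAt_pow 2 x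
  refine HasDerivAt.deriv <| HasDerivAt.congr_deriv (((((((hsq.const_mul A).add
    (((hasDerivAt_id' x).mul_const y).const_mul B)).add (hasDerivAt_const x (C * y ^ 2))).add
    ((hasDerivAt_id' x).const_mul D)).add (hasDerivAt_const x (E * y))).add
    (hasDerivAt_const x F))) (by ring)

end

theorem quadratic_phase_iff_ode_system_general
    (a b c f g : ℝ → ℝ) (J : Set ℝ)
    (α β γ δ ε κ : ℝ → ℝ)
    (hα : ∀ t ∈ J, DifferentiableAt ℝ α t) (hβ : ∀ t ∈ J, DifferentiableAt ℝ β t)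
    (hγ : ∀ t ∈ J, DifferentiableAt ℝ γ t) (hδ : ∀ t ∈ J, DifferentiableAt ℝ δ t)
    (hε : ∀ t ∈ J, DifferentiableAt ℝ ε t) (hκ : ∀ t ∈ J, DifferentiableAt ℝ κ t)
    (S : ℝ → ℝ → ℝ → ℝ)
    (hS : S = fun x y t =>
      α t * x ^ 2 + β t * (x * y) + γ t * y ^ 2 + δ t * x + ε t * y + κ t) :
    (∀ t ∈ J, ∀ x y : ℝ,
        deriv (fun t' => S x y t') t =
          -a t * (deriv (fun x' => S x' y t) x) ^ 2 - b t * x ^ 2 + f t * x +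
            (g t - c t * x) * deriv (fun x' => S x' y t) x) ↔
      (∀ t ∈ J,
        deriv α t + b t + 2 * c t * α t + 4 * a t * α t ^ 2 = 0 ∧
        deriv β t + (c t + 4 * a t * α t) * β t = 0 ∧
        deriv γ t + a t * β t ^ 2 = 0 ∧
        deriv δ t + (c t + 4 * a t * α t) * δ t = f t + 2 * α t * g t ∧
        deriv ε t = (g t - 2 * a t * δ t) * β t ∧
        deriv κ t = g t * δ t - a t * δ t ^ 2) := by
  subst hS
  refine forall₂_congr fun t ht => ?_
  calc (∀ x y : ℝ, _)
      ↔ ∀ x y : ℝ,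
        (deriv α t + b t + 2 * c t * α t + 4 * a t * α t ^ 2) * x ^ 2 +
          (deriv β t + (c t + 4 * a t * α t) * β t) * (x * y) +
          (deriv γ t + a t * β t ^ 2) * y ^ 2 +
          (deriv δ t + (c t + 4 * a t * α t) * δ t - (f t + 2 * α t * g t)) * x +
          (deriv ε t - (g t - 2 * a t * δ t) * β t) * y +
          (deriv κ t - (g t * δ t - a t * δ t ^ 2)) = 0 := forall₂_congr fun x y => by
        rw [((hα t ht).hasDerivAt.quadratic_coeffs (hβ t ht).hasDerivAt (hγ t ht).hasDerivAt
          (hδ t ht).hasDerivAt (hε t ht).hasDerivAt (hκ t ht).hasDerivAt x y).deriv,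
          deriv_quadratic_fst]
        constructor <;> intro h <;> linear_combination h
    _ ↔ _ := by simp only [forall_quadratic_eq_zero_iff, sub_eq_zero]

/-- The quadratic phase `S(x,y,t) = α t x² + β t xy + γ t y² + δ t x + ε t y + κ t`
satisfies the Hamilton–Jacobi type equation
`∂S/∂t = −a(∂S/∂x)² − b x² + f x + (g − c x)·∂S/∂x` on an open interval `J`
if and only if the coefficients satisfy the corresponding system of ODEs on `J`. -/
theorem quadratic_phase_iff_ode_system
    (a b c d f g : ℝ → ℝ) (J : Set ℝ) (hJopen : IsOpen J) (hJconn : J.OrdConnected)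
    (α β γ δ ε κ : ℝ → ℝ)
    (hα : ∀ t ∈ J, DifferentiableAt ℝ α t) (hβ : ∀ t ∈ J, DifferentiableAt ℝ β t)
    (hγ : ∀ t ∈ J, DifferentiableAt ℝ γ t) (hδ : ∀ t ∈ J, DifferentiableAt ℝ δ t)
    (hε : ∀ t ∈ J, DifferentiableAt ℝ ε t) (hκ : ∀ t ∈ J, DifferentiableAt ℝ κ t)
    (S : ℝ → ℝ → ℝ → ℝ)
    (hS : S = fun x y t =>
      α t * x ^ 2 + β t * (x * y) + γ t * y ^ 2 + δ t * x + ε t * y + κ t) :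
    (∀ t ∈ J, ∀ x y : ℝ,
        deriv (fun t' => S x y t') t =
          -a t * (deriv (fun x' => S x' y t) x) ^ 2 - b t * x ^ 2 + f t * x +
            (g t - c t * x) * deriv (fun x' => S x' y t) x) ↔
      (∀ t ∈ J,
        deriv α t + b t + 2 * c t * α t + 4 * a t * α t ^ 2 = 0 ∧
        deriv β t + (c t + 4 * a t * α t) * β t = 0 ∧
        deriv γ t + a t * β t ^ 2 = 0 ∧
        deriv δ t + (c t + 4 * a t * α t) * δ t = f t + 2 * α t * g t ∧
        deriv ε t = (g t - 2 * a t * δ t) * β t ∧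
        deriv κ t = g t * δ t - a t * δ t ^ 2) :=
  quadratic_phase_iff_ode_system_general a b c f g J α β γ δ ε κ hα hβ hγ hδ hε hκ S hS
end

section
/- Let a, b, c, d : ℝ → ℝ with a, d differentiable and a(t) ≠ 0 on an open interval J. Suppose α : J → ℝ is differentiable and solves the Riccati equation α' + b + 2cα + 4aα² = 0 on J, and suppose μ : J → ℝ is differentiable with μ(t) ≠ 0 and μ'(t)/(2μ(t)) = 2α(t)a(t) + d(t) on J. Then μ is twice differentiable and satisfies the characteristic equation μ'' − τ(t)μ' + 4σ(t)μ = 0 on J, where τ = a'/a − 2c + 4d and σ = ab − cd + d² + (d·a')/(2a) − d'/2. -/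
/-!
Writing `μ' = 2 (2aα + d) μ`, one more differentiation gives
`μ'' = 2 (2α'a + 2αa' + d') μ + 2 (2aα + d) μ'`. Eliminating `α'` with the Riccati equation and
then `α` itself via `2aα = μ'/(2μ) - d` leaves a linear equation in `μ, μ', μ''`, which is the
characteristic equation.
-/

open Filter Topology

theorem characteristic_eq_zero_of_riccati {a a' b c d d' α α' μ μ' μ'' : ℝ} (ha : a ≠ 0)
    (hric : α' + b + 2 * c * α + 4 * a * α ^ 2 = 0)
    (hμ' : μ' = 2 * (2 * α * a + d) * μ)
    (hμ'' : μ'' = 2 * (2 * α' * a + 2 * α * a' + d') * μ + 2 * (2 * α * a + d) * μ') :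
    μ'' - (a' / a - 2 * c + 4 * d) * μ' +
      4 * (a * b - c * d + d ^ 2 + d * a' / (2 * a) - d' / 2) * μ = 0 := by
  obtain rfl : α' = -(b + 2 * c * α + 4 * a * α ^ 2) := by linarith
  subst hμ'' hμ'
  field_simp
  ring

theorem riccati_to_characteristic_general
    (a b c d : ℝ → ℝ) (J : Set ℝ) (hJopen : IsOpen J)
    (ha : ∀ t ∈ J, DifferentiableAt ℝ a t) (hd : ∀ t ∈ J, DifferentiableAt ℝ d t)
    (ha0 : ∀ t ∈ J, a t ≠ 0)
    (α : ℝ → ℝ) (hα : ∀ t ∈ J, DifferentiableAt ℝ α t)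
    (hric : ∀ t ∈ J, deriv α t + b t + 2 * c t * α t + 4 * a t * α t ^ 2 = 0)
    (μ : ℝ → ℝ) (hμ : ∀ t ∈ J, DifferentiableAt ℝ μ t) (hμ0 : ∀ t ∈ J, μ t ≠ 0)
    (hμα : ∀ t ∈ J, deriv μ t / (2 * μ t) = 2 * α t * a t + d t) :
    ∀ t ∈ J, DifferentiableAt ℝ (deriv μ) t ∧
      deriv (deriv μ) t - (deriv a t / a t - 2 * c t + 4 * d t) * deriv μ t +
        4 * (a t * b t - c t * d t + d t ^ 2 + d t * deriv a t / (2 * a t) -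
          deriv d t / 2) * μ t = 0 := by
  intro t ht
  have hμ' : ∀ s ∈ J, deriv μ s = 2 * (2 * α s * a s + d s) * μ s := fun s hs => by
    rw [← hμα s hs]
    field_simp [hμ0 s hs]
  have hrhs : HasDerivAt (fun s => 2 * (2 * α s * a s + d s) * μ s)
      (2 * (2 * deriv α t * a t + 2 * α t * deriv a t + deriv d t) * μ t +
        2 * (2 * α t * a t + d t) * deriv μ t) t := by
    have hp : HasDerivAt (fun s => 2 * (2 * α s * a s + d s))
        (2 * (2 * deriv α t * a t + 2 * α t * deriv a t + deriv d t)) t :=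
      ((((hα t ht).hasDerivAt.const_mul 2).mul (ha t ht).hasDerivAt).add
        (hd t ht).hasDerivAt).const_mul 2
    exact (hp.mul (hμ t ht).hasDerivAt).congr_deriv (by ring)
  have hμ'' : HasDerivAt (deriv μ) _ t :=
    hrhs.congr_of_eventuallyEq (eventually_of_mem (hJopen.mem_nhds ht) hμ')
  exact ⟨hμ''.differentiableAt,
    characteristic_eq_zero_of_riccati (ha0 t ht) (hric t ht) (hμ' t ht) hμ''.deriv⟩

/-- If `α` solves the Riccati equation `α' + b + 2cα + 4aα² = 0` and `μ` satisfies
`μ'/(2μ) = 2αa + d` on an open interval `J`, then `μ` is twice differentiable and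
satisfies the characteristic equation `μ'' − τ μ' + 4σ μ = 0`, where
`τ = a'/a − 2c + 4d` and `σ = ab − cd + d² + d·a'/(2a) − d'/2`. -/
theorem riccati_to_characteristic
    (a b c d : ℝ → ℝ) (J : Set ℝ) (hJopen : IsOpen J) (hJconn : J.OrdConnected)
    (ha : ∀ t ∈ J, DifferentiableAt ℝ a t) (hd : ∀ t ∈ J, DifferentiableAt ℝ d t)
    (ha0 : ∀ t ∈ J, a t ≠ 0)
    (α : ℝ → ℝ) (hα : ∀ t ∈ J, DifferentiableAt ℝ α t)
    (hric : ∀ t ∈ J, deriv α t + b t + 2 * c t * α t + 4 * a t * α t ^ 2 = 0)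
    (μ : ℝ → ℝ) (hμ : ∀ t ∈ J, DifferentiableAt ℝ μ t) (hμ0 : ∀ t ∈ J, μ t ≠ 0)
    (hμα : ∀ t ∈ J, deriv μ t / (2 * μ t) = 2 * α t * a t + d t) :
    ∀ t ∈ J, DifferentiableAt ℝ (deriv μ) t ∧
      deriv (deriv μ) t - (deriv a t / a t - 2 * c t + 4 * d t) * deriv μ t +
        4 * (a t * b t - c t * d t + d t ^ 2 + d t * deriv a t / (2 * a t) -
          deriv d t / 2) * μ t = 0 :=
  riccati_to_characteristic_general a b c d J hJopen ha hd ha0 α hα hric μ hμ hμ0 hμα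
end

section
/- Let a, b, c, d : ℝ → ℝ with a, d differentiable and a(t) ≠ 0 on an open interval J, and let μ : J → ℝ be twice differentiable with μ(t) ≠ 0 on J, satisfying the characteristic equation μ'' − τ(t)μ' + 4σ(t)μ = 0, where τ = a'/a − 2c + 4d and σ = ab − cd + d² + (d·a')/(2a) − d'/2. Then α(t) := μ'(t)/(4a(t)μ(t)) − d(t)/(2a(t)) is differentiable and solves the Riccati equation α' + b + 2cα + 4aα² = 0 on J. -/
/-! With `α = μ'/(4aμ) − d/(2a)`, differentiating and clearing denominators shows that the
Riccati residual `α' + b + 2cα + 4aα²` is exactly `(μ'' − τμ' + 4σμ)/(4aμ)`; so it vanishes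
wherever the characteristic equation holds. -/

theorem hasDerivAt_div_four_mul_mul_sub_div_two_mul {a d μ ν : ℝ → ℝ} {a' d' μ' ν' t : ℝ}
    (ha : HasDerivAt a a' t) (hd : HasDerivAt d d' t) (hμ : HasDerivAt μ μ' t)
    (hν : HasDerivAt ν ν' t) (ha0 : a t ≠ 0) (hμ0 : μ t ≠ 0) :
    HasDerivAt (fun s => ν s / (4 * a s * μ s) - d s / (2 * a s))
      (ν' / (4 * a t * μ t) - ν t * (a' * μ t + a t * μ') / (4 * a t ^ 2 * μ t ^ 2) -
        (d' * a t - d t * a') / (2 * a t ^ 2)) t := by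
  have hden : 4 * a t * μ t ≠ 0 := by positivity
  refine ((hν.div ((ha.const_mul 4).mul hμ) hden).sub
    (hd.div (ha.const_mul 2) (by positivity))).congr_deriv ?_
  simp only [Pi.mul_apply]
  field_simp

theorem riccati_residual_eq_characteristic_div {a a' b c d d' m m' m'' α : ℝ}
    (ha : a ≠ 0) (hm : m ≠ 0) (hα : α = m' / (4 * a * m) - d / (2 * a)) :
    (m'' / (4 * a * m) - m' * (a' * m + a * m') / (4 * a ^ 2 * m ^ 2) -
        (d' * a - d * a') / (2 * a ^ 2)) + b + 2 * c * α + 4 * a * α ^ 2 =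
      (m'' - (a' / a - 2 * c + 4 * d) * m' +
        4 * (a * b - c * d + d ^ 2 + d * a' / (2 * a) - d' / 2) * m) / (4 * a * m) := by
  subst hα
  field_simp
  ring

theorem characteristic_to_riccati_general
    (a b c d : ℝ → ℝ) (J : Set ℝ)
    (ha : ∀ t ∈ J, DifferentiableAt ℝ a t) (hd : ∀ t ∈ J, DifferentiableAt ℝ d t)
    (ha0 : ∀ t ∈ J, a t ≠ 0)
    (μ : ℝ → ℝ)
    (hμ1 : ∀ t ∈ J, DifferentiableAt ℝ μ t)
    (hμ2 : ∀ t ∈ J, DifferentiableAt ℝ (deriv μ) t)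
    (hμ0 : ∀ t ∈ J, μ t ≠ 0)
    (hchar : ∀ t ∈ J,
      deriv (deriv μ) t - (deriv a t / a t - 2 * c t + 4 * d t) * deriv μ t +
        4 * (a t * b t - c t * d t + d t ^ 2 + d t * deriv a t / (2 * a t) -
          deriv d t / 2) * μ t = 0)
    (α : ℝ → ℝ)
    (hα : α = fun t => deriv μ t / (4 * a t * μ t) - d t / (2 * a t)) :
    ∀ t ∈ J, DifferentiableAt ℝ α t ∧
      deriv α t + b t + 2 * c t * α t + 4 * a t * α t ^ 2 = 0 := by
  intro t ht
  have hα' : HasDerivAt α _ t := hα ▸ hasDerivAt_div_four_mul_mul_sub_div_two_mul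
    (ha t ht).hasDerivAt (hd t ht).hasDerivAt (hμ1 t ht).hasDerivAt (hμ2 t ht).hasDerivAt
    (ha0 t ht) (hμ0 t ht)
  refine ⟨hα'.differentiableAt, ?_⟩
  rw [hα'.deriv, riccati_residual_eq_characteristic_div (ha0 t ht) (hμ0 t ht) (by rw [hα]),
    hchar t ht, zero_div]

/-- If `μ` is a nonvanishing twice differentiable solution of the characteristic
equation `μ'' − τ μ' + 4σ μ = 0` on an open interval `J`, with `τ = a'/a − 2c + 4d`
and `σ = ab − cd + d² + d·a'/(2a) − d'/2`, then `α := μ'/(4aμ) − d/(2a)` is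
differentiable and solves the Riccati equation `α' + b + 2cα + 4aα² = 0` on `J`. -/
theorem characteristic_to_riccati
    (a b c d : ℝ → ℝ) (J : Set ℝ) (hJopen : IsOpen J) (hJconn : J.OrdConnected)
    (ha : ∀ t ∈ J, DifferentiableAt ℝ a t) (hd : ∀ t ∈ J, DifferentiableAt ℝ d t)
    (ha0 : ∀ t ∈ J, a t ≠ 0)
    (μ : ℝ → ℝ)
    (hμ1 : ∀ t ∈ J, DifferentiableAt ℝ μ t)
    (hμ2 : ∀ t ∈ J, DifferentiableAt ℝ (deriv μ) t)
    (hμ0 : ∀ t ∈ J, μ t ≠ 0)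
    (hchar : ∀ t ∈ J,
      deriv (deriv μ) t - (deriv a t / a t - 2 * c t + 4 * d t) * deriv μ t +
        4 * (a t * b t - c t * d t + d t ^ 2 + d t * deriv a t / (2 * a t) -
          deriv d t / 2) * μ t = 0)
    (α : ℝ → ℝ)
    (hα : α = fun t => deriv μ t / (4 * a t * μ t) - d t / (2 * a t)) :
    ∀ t ∈ J, DifferentiableAt ℝ α t ∧
      deriv α t + b t + 2 * c t * α t + 4 * a t * α t ^ 2 = 0 :=
  characteristic_to_riccati_general a b c d J ha hd ha0 μ hμ1 hμ2 hμ0 hchar α hα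
end

section
/- Let a, c, d : ℝ → ℝ be continuous with a(t) ≠ 0, and let μ be differentiable with μ(t) ≠ 0 on an interval J containing 0. Set α(t) = μ'(t)/(4a(t)μ(t)) − d(t)/(2a(t)) and define β(t) = −(1/μ(t))·exp(−∫₀ᵗ (c(τ) − 2d(τ)) dτ). Then β is differentiable on J and satisfies β' + (c + 4aα)β = 0. -/
open MeasureTheory intervalIntegral

/-! `β = -E/μ` with `E' = -(c - 2d) E`, so the logarithmic derivative of `β` is
`-(μ'/μ + c - 2d)`; the choice of `α` makes `c + 4aα` exactly this coefficient. -/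

theorem HasDerivAt.neg_inv_mul_exp_neg {μ F : ℝ → ℝ} {μ' f t : ℝ} (hμ : HasDerivAt μ μ' t)
    (hF : HasDerivAt F f t) (hμt : μ t ≠ 0) :
    HasDerivAt (fun x => -(1 / μ x) * Real.exp (-F x))
      (-(μ' / μ t + f) * (-(1 / μ t) * Real.exp (-F t))) t := by
  have h := (hμ.fun_inv hμt).fun_neg.fun_mul hF.fun_neg.exp
  simp only [← one_div] at h
  refine h.congr_deriv ?_
  field_simp

theorem beta_coefficient_ode_general
    (a c d : ℝ → ℝ) (hc : Continuous c) (hd : Continuous d)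
    (ha0 : ∀ t : ℝ, a t ≠ 0)
    (J : Set ℝ)
    (μ : ℝ → ℝ) (hμ : ∀ t ∈ J, DifferentiableAt ℝ μ t) (hμ0 : ∀ t ∈ J, μ t ≠ 0)
    (α : ℝ → ℝ)
    (hα : α = fun t => deriv μ t / (4 * a t * μ t) - d t / (2 * a t))
    (β : ℝ → ℝ)
    (hβ : β = fun t => -(1 / μ t) * Real.exp (-∫ τ in (0:ℝ)..t, (c τ - 2 * d τ))) :
    ∀ t ∈ J, DifferentiableAt ℝ β t ∧
      deriv β t + (c t + 4 * a t * α t) * β t = 0 := by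
  intro t ht
  have hβ' : HasDerivAt β (-(deriv μ t / μ t + (c t - 2 * d t)) * β t) t := by
    subst hβ
    exact (hμ t ht).hasDerivAt.neg_inv_mul_exp_neg
      ((hc.sub (continuous_const.mul hd)).integral_hasStrictDerivAt 0 t).hasDerivAt (hμ0 t ht)
  have hcoeff : c t + 4 * a t * α t = deriv μ t / μ t + (c t - 2 * d t) := by
    have := ha0 t
    have := hμ0 t ht
    subst hα
    field_simp
    ring
  refine ⟨hβ'.differentiableAt, ?_⟩
  rw [hβ'.deriv, hcoeff]
  ring

/-- With `α = μ'/(4aμ) − d/(2a)`, the function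
`β(t) = −(1/μ(t))·exp(−∫₀ᵗ (c − 2d))` is differentiable and satisfies
`β' + (c + 4aα)β = 0` on an interval `J` containing `0`. -/
theorem beta_coefficient_ode
    (a c d : ℝ → ℝ) (ha : Continuous a) (hc : Continuous c) (hd : Continuous d)
    (ha0 : ∀ t : ℝ, a t ≠ 0)
    (J : Set ℝ) (hJopen : IsOpen J) (hJconn : J.OrdConnected) (hJ0 : (0:ℝ) ∈ J)
    (μ : ℝ → ℝ) (hμ : ∀ t ∈ J, DifferentiableAt ℝ μ t) (hμ0 : ∀ t ∈ J, μ t ≠ 0)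
    (α : ℝ → ℝ)
    (hα : α = fun t => deriv μ t / (4 * a t * μ t) - d t / (2 * a t))
    (β : ℝ → ℝ)
    (hβ : β = fun t => -(1 / μ t) * Real.exp (-∫ τ in (0:ℝ)..t, (c τ - 2 * d τ))) :
    ∀ t ∈ J, DifferentiableAt ℝ β t ∧
      deriv β t + (c t + 4 * a t * α t) * β t = 0 :=
  beta_coefficient_ode_general a c d hc hd ha0 J μ hμ hμ0 α hα β hβ
end

section
/- Let a, b, c, d : ℝ → ℝ with a, d differentiable, a(t) ≠ 0, and c, d continuous, and let μ be twice differentiable on an interval J ⊂ (0, ∞) with μ(t) ≠ 0 and μ'(t) ≠ 0, satisfying the characteristic equation μ'' − τμ' + 4σμ = 0 where τ = a'/a − 2c + 4d and σ = ab − cd + d² + (d·a')/(2a) − d'/2. Set E(t) = exp(−∫₀ᵗ (c(τ) − 2d(τ)) dτ), β(t) = −E(t)/μ(t), and define γ(t) = (a(t)/(μ(t)μ'(t)))·E(t)² − 4∫₀ᵗ (a(τ)σ(τ)/μ'(τ)²)·E(τ)² dτ. Then γ is differentiable on J and satisfies γ' + aβ² = 0. -/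
open MeasureTheory intervalIntegral

/-! With `τ = a'/a − 2c + 4d`, the function `u = aE²` satisfies `u' = τu`, the same `τ` as in the
characteristic equation `μ'' = τμ' − 4σμ`. Hence the quotient rule gives
`(u/(μμ'))' = −u/μ² + 4σu/μ'²`: the first term is `−aβ²` and the second is cancelled by the
derivative of the integral term of `γ`. -/

theorem hasDerivAt_exp_neg_integral {f : ℝ → ℝ} (hf : Continuous f) (t : ℝ) :
    HasDerivAt (fun s => Real.exp (-∫ τ in (0:ℝ)..s, f τ))
      (-f t * Real.exp (-∫ τ in (0:ℝ)..t, f τ)) t := by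
  have hint : HasDerivAt (fun s => ∫ τ in (0:ℝ)..s, f τ) (f t) t :=
    integral_hasDerivAt_right (hf.intervalIntegrable 0 t)
      hf.aestronglyMeasurable.stronglyMeasurableAtFilter hf.continuousAt
  exact hint.neg.exp.congr_deriv (mul_comm _ _)

theorem hasDerivAt_div_mul_of_char {u μ μ' : ℝ → ℝ} {t τ σ : ℝ}
    (hu : HasDerivAt u (τ * u t) t) (hμ : HasDerivAt μ (μ' t) t)
    (hμ' : HasDerivAt μ' (τ * μ' t - 4 * σ * μ t) t) (hμ0 : μ t ≠ 0) (hμ'0 : μ' t ≠ 0) :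
    HasDerivAt (fun s => u s / (μ s * μ' s)) (-u t / μ t ^ 2 + 4 * σ * u t / μ' t ^ 2) t := by
  refine (hu.fun_div (hμ.fun_mul hμ') (mul_ne_zero hμ0 hμ'0)).congr_deriv ?_
  field_simp
  ring

theorem gamma_coefficient_ode_general
    (a c d : ℝ → ℝ)
    (ha : Differentiable ℝ a)
    (ha0 : ∀ t : ℝ, a t ≠ 0) (hc : Continuous c) (hdc : Continuous d)
    (J : Set ℝ) (hJopen : IsOpen J)
    (μ : ℝ → ℝ)
    (hμ1 : ∀ t ∈ J, DifferentiableAt ℝ μ t)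
    (hμ2 : ∀ t ∈ J, DifferentiableAt ℝ (deriv μ) t)
    (hμ0 : ∀ t ∈ J, μ t ≠ 0) (hμ'0 : ∀ t ∈ J, deriv μ t ≠ 0)
    (σ : ℝ → ℝ)
    (hchar : ∀ t ∈ J,
      deriv (deriv μ) t - (deriv a t / a t - 2 * c t + 4 * d t) * deriv μ t +
        4 * σ t * μ t = 0)
    (E : ℝ → ℝ) (hE : E = fun t => Real.exp (-∫ τ in (0:ℝ)..t, (c τ - 2 * d τ)))
    (β : ℝ → ℝ) (hβ : β = fun t => -E t / μ t)
    (h : ℝ → ℝ) (hh : h = fun τ => a τ * σ τ / (deriv μ τ) ^ 2 * E τ ^ 2)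
    (hInt : ∀ t ∈ J, IntervalIntegrable h volume 0 t)
    (hhc : ∀ t ∈ J, ContinuousAt h t)
    (γ : ℝ → ℝ)
    (hγ : γ = fun t => a t / (μ t * deriv μ t) * E t ^ 2 - 4 * ∫ τ in (0:ℝ)..t, h τ) :
    ∀ t ∈ J, DifferentiableAt ℝ γ t ∧ deriv γ t + a t * β t ^ 2 = 0 := by
  intro t ht
  set τ := deriv a t / a t - 2 * c t + 4 * d t
  have hE' : HasDerivAt E (-(c t - 2 * d t) * E t) t := by
    subst hE; exact hasDerivAt_exp_neg_integral (hc.sub (continuous_const.mul hdc)) t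
  have hu : HasDerivAt (fun s => a s * E s ^ 2) (τ * (a t * E t ^ 2)) t := by
    refine ((ha t).hasDerivAt.fun_mul (hE'.fun_pow 2)).congr_deriv ?_
    simp only [τ]
    field_simp [ha0 t]
    ring
  have hμ' : HasDerivAt (deriv μ) (τ * deriv μ t - 4 * σ t * μ t) t := by
    refine (hμ2 t ht).hasDerivAt.congr_deriv ?_
    linarith [hchar t ht]
  have hI : HasDerivAt (fun s => ∫ τ in (0:ℝ)..s, h τ) (h t) t :=
    integral_hasDerivAt_right (hInt t ht)
      (ContinuousOn.stronglyMeasurableAtFilter hJopen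
        (fun x hx => (hhc x hx).continuousWithinAt) t ht) (hhc t ht)
  have hγ' : HasDerivAt γ
      (-(a t * E t ^ 2) / μ t ^ 2 + 4 * σ t * (a t * E t ^ 2) / deriv μ t ^ 2 - 4 * h t) t := by
    have hγeq : γ = fun s => a s * E s ^ 2 / (μ s * deriv μ s) - 4 * ∫ τ in (0:ℝ)..s, h τ := by
      subst hγ; funext s; ring
    rw [hγeq]
    exact (hasDerivAt_div_mul_of_char hu (hμ1 t ht).hasDerivAt hμ' (hμ0 t ht)
      (hμ'0 t ht)).fun_sub (hI.const_mul 4)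
  refine ⟨hγ'.differentiableAt, ?_⟩
  rw [hγ'.deriv, hβ, hh]
  ring

/-- The coefficient `γ(t) = (a/(μμ'))E² − 4∫₀ᵗ (aσ/μ'²)E²`, with
`E(t) = exp(−∫₀ᵗ(c − 2d))` and `β = −E/μ`, is differentiable and satisfies
`γ' + aβ² = 0` on `J`, provided `μ` solves the characteristic equation. -/
theorem gamma_coefficient_ode
    (a b c d : ℝ → ℝ)
    (ha : Differentiable ℝ a) (hd : Differentiable ℝ d)
    (ha0 : ∀ t : ℝ, a t ≠ 0) (hc : Continuous c) (hdc : Continuous d)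
    (J : Set ℝ) (hJopen : IsOpen J) (hJconn : J.OrdConnected) (hJ : J ⊆ Set.Ioi (0:ℝ))
    (μ : ℝ → ℝ)
    (hμ1 : ∀ t ∈ J, DifferentiableAt ℝ μ t)
    (hμ2 : ∀ t ∈ J, DifferentiableAt ℝ (deriv μ) t)
    (hμ0 : ∀ t ∈ J, μ t ≠ 0) (hμ'0 : ∀ t ∈ J, deriv μ t ≠ 0)
    (σ : ℝ → ℝ)
    (hσ : σ = fun t => a t * b t - c t * d t + d t ^ 2 + d t * deriv a t / (2 * a t) -
      deriv d t / 2)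
    (hchar : ∀ t ∈ J,
      deriv (deriv μ) t - (deriv a t / a t - 2 * c t + 4 * d t) * deriv μ t +
        4 * σ t * μ t = 0)
    (E : ℝ → ℝ) (hE : E = fun t => Real.exp (-∫ τ in (0:ℝ)..t, (c τ - 2 * d τ)))
    (β : ℝ → ℝ) (hβ : β = fun t => -E t / μ t)
    (h : ℝ → ℝ) (hh : h = fun τ => a τ * σ τ / (deriv μ τ) ^ 2 * E τ ^ 2)
    (hInt : ∀ t ∈ J, IntervalIntegrable h volume 0 t)
    (hhc : ∀ t ∈ J, ContinuousAt h t)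
    (γ : ℝ → ℝ)
    (hγ : γ = fun t => a t / (μ t * deriv μ t) * E t ^ 2 - 4 * ∫ τ in (0:ℝ)..t, h τ) :
    ∀ t ∈ J, DifferentiableAt ℝ γ t ∧ deriv γ t + a t * β t ^ 2 = 0 :=
  gamma_coefficient_ode_general a c d ha ha0 hc hdc J hJopen μ hμ1 hμ2 hμ0 hμ'0 σ hchar E hE β hβ h
    hh hInt hhc γ hγ
end

section
/- Let a, b, c, d, f, g : ℝ → ℝ with a, d differentiable and a(t) ≠ 0, and let μ be twice differentiable on an interval J with μ(t) ≠ 0 and μ'(t) ≠ 0, satisfying the characteristic equation μ'' − τμ' + 4σμ = 0 where τ = a'/a − 2c + 4d and σ = ab − cd + d² + (d·a')/(2a) − d'/2. Let δ be differentiable satisfying δ' + (c + μ'/μ − 2d)δ = f + 2αg with α = μ'/(4aμ) − d/(2a), and define κ(t) = (a(t)μ(t)/μ'(t))·δ(t)² − 4∫₀ᵗ (a(τ)σ(τ)/μ'(τ)²)·(μ(τ)δ(τ))² dτ − 2∫₀ᵗ (a(τ)/μ'(τ))·μ(τ)δ(τ)·(f(τ) − (d(τ)/a(τ))g(τ)) dτ.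 Then κ is differentiable on J and satisfies κ' = gδ − aδ². -/
open MeasureTheory intervalIntegral

/-!
For the weight `w = aμ/μ'`, the characteristic equation for `μ` is exactly what makes
`w' = a + 2(c − 2d)w + 4aσ(μ/μ')²`. Combined with the linear equation for `δ`, this gives
`(wδ²)' = gδ − aδ² + 4aσ(μδ/μ')² + 2(a/μ')μδ(f − (d/a)g)`, and the two integrals in `κ`
remove exactly the last two terms.
-/

theorem integral_hasDerivAt_right_of_isOpen {f : ℝ → ℝ} {U : Set ℝ} {a t : ℝ}
    (hint : IntervalIntegrable f volume a t) (hU : IsOpen U) (ht : t ∈ U)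
    (hf : ∀ x ∈ U, ContinuousAt f x) :
    HasDerivAt (fun u => ∫ x in a..u, f x) (f t) t :=
  integral_hasDerivAt_right hint
    ((continuousOn_of_forall_continuousAt hf).stronglyMeasurableAtFilter hU t ht) (hf t ht)

section Weight

variable {a μ δ : ℝ → ℝ} {t c d σ f g : ℝ}

theorem hasDerivAt_weight (ha : DifferentiableAt ℝ a t) (hμ : DifferentiableAt ℝ μ t)
    (hμ' : DifferentiableAt ℝ (deriv μ) t) (ha0 : a t ≠ 0) (hμ'0 : deriv μ t ≠ 0)
    (hchar : deriv (deriv μ) t - (deriv a t / a t - 2 * c + 4 * d) * deriv μ t +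
      4 * σ * μ t = 0) :
    HasDerivAt (fun x => a x * μ x / deriv μ x)
      (a t + 2 * (c - 2 * d) * (a t * μ t / deriv μ t) + 4 * a t * σ * (μ t / deriv μ t) ^ 2)
      t := by
  have hμ'' : deriv (deriv μ) t =
      (deriv a t / a t - 2 * c + 4 * d) * deriv μ t - 4 * σ * μ t := by
    linear_combination hchar
  refine ((ha.hasDerivAt.mul hμ.hasDerivAt).div hμ'.hasDerivAt hμ'0).congr_deriv ?_
  rw [Pi.mul_apply, hμ'']
  field_simp
  ring

theorem hasDerivAt_weight_mul_sq (ha : DifferentiableAt ℝ a t) (hμ : DifferentiableAt ℝ μ t)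
    (hμ' : DifferentiableAt ℝ (deriv μ) t) (hδ : DifferentiableAt ℝ δ t) (ha0 : a t ≠ 0)
    (hμ0 : μ t ≠ 0) (hμ'0 : deriv μ t ≠ 0)
    (hchar : deriv (deriv μ) t - (deriv a t / a t - 2 * c + 4 * d) * deriv μ t +
      4 * σ * μ t = 0)
    (hδeq : deriv δ t + (c + deriv μ t / μ t - 2 * d) * δ t =
      f + 2 * (deriv μ t / (4 * a t * μ t) - d / (2 * a t)) * g) :
    HasDerivAt (fun x => a x * μ x / deriv μ x * δ x ^ 2)
      (g * δ t - a t * δ t ^ 2 + 4 * (a t * σ / deriv μ t ^ 2 * (μ t * δ t) ^ 2) +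
        2 * (a t / deriv μ t * (μ t * δ t) * (f - d / a t * g))) t := by
  have hδ' : deriv δ t = f + 2 * (deriv μ t / (4 * a t * μ t) - d / (2 * a t)) * g -
      (c + deriv μ t / μ t - 2 * d) * δ t := by
    linear_combination hδeq
  refine ((hasDerivAt_weight ha hμ hμ' ha0 hμ'0 hchar).mul (hδ.hasDerivAt.pow 2)).congr_deriv ?_
  rw [Pi.pow_apply, hδ']
  field_simp
  ring

end Weight

theorem kappa_coefficient_ode_general
    (a c d f g : ℝ → ℝ)
    (ha : Differentiable ℝ a)
    (ha0 : ∀ t : ℝ, a t ≠ 0)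
    (J : Set ℝ) (hJopen : IsOpen J)
    (μ : ℝ → ℝ)
    (hμ1 : ∀ t ∈ J, DifferentiableAt ℝ μ t)
    (hμ2 : ∀ t ∈ J, DifferentiableAt ℝ (deriv μ) t)
    (hμ0 : ∀ t ∈ J, μ t ≠ 0) (hμ'0 : ∀ t ∈ J, deriv μ t ≠ 0)
    (σ : ℝ → ℝ)
    (hchar : ∀ t ∈ J,
      deriv (deriv μ) t - (deriv a t / a t - 2 * c t + 4 * d t) * deriv μ t +
        4 * σ t * μ t = 0)
    (α : ℝ → ℝ)
    (hα : α = fun t => deriv μ t / (4 * a t * μ t) - d t / (2 * a t))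
    (δ : ℝ → ℝ) (hδ1 : ∀ t ∈ J, DifferentiableAt ℝ δ t)
    (hδ2 : ∀ t ∈ J,
      deriv δ t + (c t + deriv μ t / μ t - 2 * d t) * δ t = f t + 2 * α t * g t)
    (h₁ h₂ : ℝ → ℝ)
    (hh₁ : h₁ = fun τ => a τ * σ τ / (deriv μ τ) ^ 2 * (μ τ * δ τ) ^ 2)
    (hh₂ : h₂ = fun τ => a τ / deriv μ τ * (μ τ * δ τ) * (f τ - d τ / a τ * g τ))
    (hInt₁ : ∀ t ∈ J, IntervalIntegrable h₁ volume 0 t)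
    (hInt₂ : ∀ t ∈ J, IntervalIntegrable h₂ volume 0 t)
    (hhc₁ : ∀ t ∈ J, ContinuousAt h₁ t) (hhc₂ : ∀ t ∈ J, ContinuousAt h₂ t)
    (κ : ℝ → ℝ)
    (hκ : κ = fun t => a t * μ t / deriv μ t * δ t ^ 2 -
      4 * (∫ τ in (0:ℝ)..t, h₁ τ) - 2 * ∫ τ in (0:ℝ)..t, h₂ τ) :
    ∀ t ∈ J, DifferentiableAt ℝ κ t ∧ deriv κ t = g t * δ t - a t * δ t ^ 2 := by
  intro t ht
  subst hα
  have hw := hasDerivAt_weight_mul_sq (ha t) (hμ1 t ht) (hμ2 t ht) (hδ1 t ht) (ha0 t)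
    (hμ0 t ht) (hμ'0 t ht) (hchar t ht) (hδ2 t ht)
  have hI₁ := integral_hasDerivAt_right_of_isOpen (hInt₁ t ht) hJopen ht hhc₁
  have hI₂ := integral_hasDerivAt_right_of_isOpen (hInt₂ t ht) hJopen ht hhc₂
  have hκ' : HasDerivAt κ (g t * δ t - a t * δ t ^ 2) t := by
    subst hκ hh₁ hh₂
    refine ((hw.sub (hI₁.const_mul 4)).sub (hI₂.const_mul 2)).congr_deriv ?_
    ring
  exact ⟨hκ'.differentiableAt, hκ'.deriv⟩

/-- The coefficient
`κ(t) = (aμ/μ')δ² − 4∫₀ᵗ (aσ/μ'²)(μδ)² − 2∫₀ᵗ (a/μ')μδ(f − (d/a)g)` is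
differentiable and satisfies `κ' = gδ − aδ²` on `J`, provided `μ` solves the
characteristic equation and `δ` solves `δ' + (c + μ'/μ − 2d)δ = f + 2αg`. -/
theorem kappa_coefficient_ode
    (a b c d f g : ℝ → ℝ)
    (ha : Differentiable ℝ a) (hd : Differentiable ℝ d)
    (ha0 : ∀ t : ℝ, a t ≠ 0)
    (J : Set ℝ) (hJopen : IsOpen J) (hJconn : J.OrdConnected)
    (μ : ℝ → ℝ)
    (hμ1 : ∀ t ∈ J, DifferentiableAt ℝ μ t)
    (hμ2 : ∀ t ∈ J, DifferentiableAt ℝ (deriv μ) t)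
    (hμ0 : ∀ t ∈ J, μ t ≠ 0) (hμ'0 : ∀ t ∈ J, deriv μ t ≠ 0)
    (σ : ℝ → ℝ)
    (hσ : σ = fun t => a t * b t - c t * d t + d t ^ 2 + d t * deriv a t / (2 * a t) -
      deriv d t / 2)
    (hchar : ∀ t ∈ J,
      deriv (deriv μ) t - (deriv a t / a t - 2 * c t + 4 * d t) * deriv μ t +
        4 * σ t * μ t = 0)
    (α : ℝ → ℝ)
    (hα : α = fun t => deriv μ t / (4 * a t * μ t) - d t / (2 * a t))
    (δ : ℝ → ℝ) (hδ1 : ∀ t ∈ J, DifferentiableAt ℝ δ t)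
    (hδ2 : ∀ t ∈ J,
      deriv δ t + (c t + deriv μ t / μ t - 2 * d t) * δ t = f t + 2 * α t * g t)
    (h₁ h₂ : ℝ → ℝ)
    (hh₁ : h₁ = fun τ => a τ * σ τ / (deriv μ τ) ^ 2 * (μ τ * δ τ) ^ 2)
    (hh₂ : h₂ = fun τ => a τ / deriv μ τ * (μ τ * δ τ) * (f τ - d τ / a τ * g τ))
    (hInt₁ : ∀ t ∈ J, IntervalIntegrable h₁ volume 0 t)
    (hInt₂ : ∀ t ∈ J, IntervalIntegrable h₂ volume 0 t)
    (hhc₁ : ∀ t ∈ J, ContinuousAt h₁ t) (hhc₂ : ∀ t ∈ J, ContinuousAt h₂ t)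
    (κ : ℝ → ℝ)
    (hκ : κ = fun t => a t * μ t / deriv μ t * δ t ^ 2 -
      4 * (∫ τ in (0:ℝ)..t, h₁ τ) - 2 * ∫ τ in (0:ℝ)..t, h₂ τ) :
    ∀ t ∈ J, DifferentiableAt ℝ κ t ∧ deriv κ t = g t * δ t - a t * δ t ^ 2 :=
  kappa_coefficient_ode_general a c d f g ha ha0 J hJopen μ hμ1 hμ2 hμ0 hμ'0 σ hchar α hα δ hδ1 hδ2
    h₁ h₂ hh₁ hh₂ hInt₁ hInt₂ hhc₁ hhc₂ κ hκ
end

section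
/- Let a, b, c, d, f, g : ℝ → ℝ be given coefficient functions, let α, β, γ, δ, ε, κ : J → ℝ be differentiable on an open interval J and satisfy the system α' + b + 2cα + 4aα² = 0, β' + (c + 4aα)β = 0, γ' + aβ² = 0, δ' + (c + 4aα)δ = f + 2αg, ε' = (g − 2aδ)β, κ' = gδ − aδ² on J. Let A : J → ℂ be differentiable with A(t) ≠ 0 and A'(t) = −(2a(t)α(t) + d(t))·A(t) for all t ∈ J. Fix y ∈ ℝ and set S(x, y, t) = α(t)x² + β(t)xy + γ(t)y² + δ(t)x + ε(t)y + κ(t) and ψ(x, t) = A(t)·exp(i·S(x, y, t)). Then ψ satisfies the linear Schrödinger equation i·∂ψ/∂t = −a(t)·∂²ψ/∂x² + b(t)x²ψ − i(c(t)x·∂ψ/∂x + d(t)ψ) − f(t)xψ + i·g(t)·∂ψ/∂x for all x ∈ ℝ and t ∈ J. -/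
/-!
Writing `ψ = A e^{iS}`, one has `∂ₓψ = i Sₓ ψ` and `∂ₓ²ψ = (i Sₓₓ − Sₓ²) ψ`, so after dividing by
`ψ` the Schrödinger equation splits into an imaginary part, which is the transport equation
`A' = −(a Sₓₓ/2 + d) A` for the amplitude, and a real part, which is the Hamilton–Jacobi equation
`Sₜ + a Sₓ² + b x² + c x Sₓ − f x − g Sₓ = 0`. For the quadratic phase the latter is a polynomial
in `x, y` whose coefficients are exactly the six equations of the system.
-/

open Complex

lemma HasDerivAt.mul_cexp_I_mul {A : ℝ → ℂ} {S : ℝ → ℝ} {A' : ℂ} {S' t : ℝ}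
    (hA : HasDerivAt A A' t) (hS : HasDerivAt S S' t) :
    HasDerivAt (fun t => A t * cexp (I * S t))
      (A' * cexp (I * S t) + I * S' * (A t * cexp (I * S t))) t :=
  (hA.mul (hS.ofReal_comp.const_mul I).cexp).congr_deriv (by ring)

lemma quadratic_phase_hamiltonJacobi {a b c f g α β δ α' β' γ' δ' ε' κ' x y : ℝ}
    (hα : α' + b + 2 * c * α + 4 * a * α ^ 2 = 0) (hβ : β' + (c + 4 * a * α) * β = 0)
    (hγ : γ' + a * β ^ 2 = 0) (hδ : δ' + (c + 4 * a * α) * δ = f + 2 * α * g)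
    (hε : ε' = (g - 2 * a * δ) * β) (hκ : κ' = g * δ - a * δ ^ 2) :
    (α' * x ^ 2 + β' * (x * y) + γ' * y ^ 2 + δ' * x + ε' * y + κ') +
      a * (2 * α * x + β * y + δ) ^ 2 + b * x ^ 2 + c * x * (2 * α * x + β * y + δ) -
      f * x - g * (2 * α * x + β * y + δ) = 0 := by
  linear_combination x ^ 2 * hα + x * y * hβ + y ^ 2 * hγ + x * hδ + y * hε + hκ

theorem schrodinger_of_hamiltonJacobi {a b c d f g α St x t : ℝ} {A : ℝ → ℂ} {A' : ℂ}
    {S : ℝ → ℝ → ℝ} {Sx : ℝ → ℝ} {ψ : ℝ → ℝ → ℂ}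
    (hψ : ψ = fun x t => A t * cexp (I * S x t))
    (hA : HasDerivAt A A' t) (hSt : HasDerivAt (fun t' => S x t') St t)
    (hSx : ∀ x', HasDerivAt (fun x'' => S x'' t) (Sx x') x') (hSxx : HasDerivAt Sx (2 * α) x)
    (htransport : A' = -((2 * a * α + d : ℝ) : ℂ) * A t)
    (hHJ : St + a * Sx x ^ 2 + b * x ^ 2 + c * x * Sx x - f * x - g * Sx x = 0) :
    I * deriv (fun t' => ψ x t') t =
      -(a : ℂ) * deriv (deriv fun x' => ψ x' t) x + (b : ℂ) * (x : ℂ) ^ 2 * ψ x t -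
        I * ((c : ℂ) * (x : ℂ) * deriv (fun x' => ψ x' t) x + (d : ℂ) * ψ x t) -
        (f : ℂ) * (x : ℂ) * ψ x t + I * (g : ℂ) * deriv (fun x' => ψ x' t) x := by
  subst hψ
  have hψx : ∀ x', HasDerivAt (fun x'' => A t * cexp (I * S x'' t))
      (I * Sx x' * (A t * cexp (I * S x' t))) x' := fun x' => by
    simpa using (hasDerivAt_const x' (A t)).mul_cexp_I_mul (hSx x')
  have hψxx : HasDerivAt (fun x' => I * Sx x' * (A t * cexp (I * S x' t)))
      (I * (2 * α : ℝ) * (A t * cexp (I * S x t)) +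
        I * Sx x * (I * Sx x * (A t * cexp (I * S x t)))) x :=
    (hSxx.ofReal_comp.const_mul I).mul (hψx x)
  rw [(hA.mul_cexp_I_mul hSt).deriv, funext fun x' => (hψx x').deriv, hψxx.deriv, htransport]
  have hHJℂ := congrArg ((↑) : ℝ → ℂ) hHJ
  push_cast at hHJℂ ⊢
  linear_combination (-(A t * cexp (I * S x t))) * hHJℂ
    + (A t * cexp (I * S x t) * (St + a * Sx x ^ 2 + c * x * Sx x - g * Sx x)) * I_sq

theorem quadratic_ansatz_solves_schrodinger_general
    (a b c d f g : ℝ → ℝ) (J : Set ℝ)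
    (α β γ δ ε κ : ℝ → ℝ)
    (hα : ∀ t ∈ J, DifferentiableAt ℝ α t) (hβ : ∀ t ∈ J, DifferentiableAt ℝ β t)
    (hγ : ∀ t ∈ J, DifferentiableAt ℝ γ t) (hδ : ∀ t ∈ J, DifferentiableAt ℝ δ t)
    (hε : ∀ t ∈ J, DifferentiableAt ℝ ε t) (hκ : ∀ t ∈ J, DifferentiableAt ℝ κ t)
    (hsys : ∀ t ∈ J,
      deriv α t + b t + 2 * c t * α t + 4 * a t * α t ^ 2 = 0 ∧
      deriv β t + (c t + 4 * a t * α t) * β t = 0 ∧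
      deriv γ t + a t * β t ^ 2 = 0 ∧
      deriv δ t + (c t + 4 * a t * α t) * δ t = f t + 2 * α t * g t ∧
      deriv ε t = (g t - 2 * a t * δ t) * β t ∧
      deriv κ t = g t * δ t - a t * δ t ^ 2)
    (A : ℝ → ℂ)
    (hA1 : ∀ t ∈ J, DifferentiableAt ℝ A t)
    (hA2 : ∀ t ∈ J, deriv A t = -(((2 * a t * α t + d t : ℝ)) : ℂ) * A t)
    (y : ℝ)
    (S : ℝ → ℝ → ℝ)
    (hS : S = fun x t =>
      α t * x ^ 2 + β t * (x * y) + γ t * y ^ 2 + δ t * x + ε t * y + κ t)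
    (ψ : ℝ → ℝ → ℂ)
    (hψ : ψ = fun x t => A t * Complex.exp (Complex.I * ((S x t : ℝ) : ℂ))) :
    ∀ x : ℝ, ∀ t ∈ J,
      Complex.I * deriv (fun t' => ψ x t') t =
        -((a t : ℝ) : ℂ) * deriv (deriv fun x' => ψ x' t) x +
          ((b t : ℝ) : ℂ) * ((x : ℂ)) ^ 2 * ψ x t -
          Complex.I * (((c t : ℝ) : ℂ) * (x : ℂ) * deriv (fun x' => ψ x' t) x +
            ((d t : ℝ) : ℂ) * ψ x t) -
          ((f t : ℝ) : ℂ) * (x : ℂ) * ψ x t +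
          Complex.I * ((g t : ℝ) : ℂ) * deriv (fun x' => ψ x' t) x := by
  intro x t ht
  obtain ⟨eα, eβ, eγ, eδ, eε, eκ⟩ := hsys t ht
  have hSt : HasDerivAt (fun t' => S x t')
      (deriv α t * x ^ 2 + deriv β t * (x * y) + deriv γ t * y ^ 2 + deriv δ t * x +
        deriv ε t * y + deriv κ t) t := by
    subst hS
    exact ((((((hα t ht).hasDerivAt.mul_const _).add ((hβ t ht).hasDerivAt.mul_const _)).add
      ((hγ t ht).hasDerivAt.mul_const _)).add ((hδ t ht).hasDerivAt.mul_const _)).add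
      ((hε t ht).hasDerivAt.mul_const _)).add (hκ t ht).hasDerivAt
  have hSx (x' : ℝ) : HasDerivAt (fun x'' => S x'' t) (2 * α t * x' + β t * y + δ t) x' := by
    subst hS
    refine (((((((hasDerivAt_pow 2 x').const_mul (α t)).add
      (((hasDerivAt_id x').mul_const y).const_mul (β t))).add_const _).add
      ((hasDerivAt_id x').const_mul (δ t))).add_const _).add_const _).congr_deriv ?_
    simp only [Nat.cast_ofNat]
    ring
  have hSxx : HasDerivAt (fun x' => 2 * α t * x' + β t * y + δ t) (2 * α t) x := by
    simpa using (((hasDerivAt_id x).const_mul (2 * α t)).add_const (β t * y)).add_const (δ t)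
  exact schrodinger_of_hamiltonJacobi hψ (hA1 t ht).hasDerivAt hSt hSx hSxx
    (hA2 t ht) (quadratic_phase_hamiltonJacobi eα eβ eγ eδ eε eκ)

/-- If the phase coefficients `α, β, γ, δ, ε, κ` solve the ODE system and the
amplitude `A` satisfies `A' = −(2aα + d)A`, then for each fixed `y` the function
`ψ(x,t) = A(t)·e^{iS(x,y,t)}` solves the linear Schrödinger equation
`i·∂ψ/∂t = −a ∂²ψ/∂x² + b x² ψ − i(c x ∂ψ/∂x + d ψ) − f x ψ + i g ∂ψ/∂x`. -/
theorem quadratic_ansatz_solves_schrodinger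
    (a b c d f g : ℝ → ℝ) (J : Set ℝ) (hJopen : IsOpen J) (hJconn : J.OrdConnected)
    (α β γ δ ε κ : ℝ → ℝ)
    (hα : ∀ t ∈ J, DifferentiableAt ℝ α t) (hβ : ∀ t ∈ J, DifferentiableAt ℝ β t)
    (hγ : ∀ t ∈ J, DifferentiableAt ℝ γ t) (hδ : ∀ t ∈ J, DifferentiableAt ℝ δ t)
    (hε : ∀ t ∈ J, DifferentiableAt ℝ ε t) (hκ : ∀ t ∈ J, DifferentiableAt ℝ κ t)
    (hsys : ∀ t ∈ J,
      deriv α t + b t + 2 * c t * α t + 4 * a t * α t ^ 2 = 0 ∧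
      deriv β t + (c t + 4 * a t * α t) * β t = 0 ∧
      deriv γ t + a t * β t ^ 2 = 0 ∧
      deriv δ t + (c t + 4 * a t * α t) * δ t = f t + 2 * α t * g t ∧
      deriv ε t = (g t - 2 * a t * δ t) * β t ∧
      deriv κ t = g t * δ t - a t * δ t ^ 2)
    (A : ℝ → ℂ) (hA0 : ∀ t ∈ J, A t ≠ 0)
    (hA1 : ∀ t ∈ J, DifferentiableAt ℝ A t)
    (hA2 : ∀ t ∈ J, deriv A t = -(((2 * a t * α t + d t : ℝ)) : ℂ) * A t)
    (y : ℝ)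
    (S : ℝ → ℝ → ℝ)
    (hS : S = fun x t =>
      α t * x ^ 2 + β t * (x * y) + γ t * y ^ 2 + δ t * x + ε t * y + κ t)
    (ψ : ℝ → ℝ → ℂ)
    (hψ : ψ = fun x t => A t * Complex.exp (Complex.I * ((S x t : ℝ) : ℂ))) :
    ∀ x : ℝ, ∀ t ∈ J,
      Complex.I * deriv (fun t' => ψ x t') t =
        -((a t : ℝ) : ℂ) * deriv (deriv fun x' => ψ x' t) x +
          ((b t : ℝ) : ℂ) * ((x : ℂ)) ^ 2 * ψ x t -
          Complex.I * (((c t : ℝ) : ℂ) * (x : ℂ) * deriv (fun x' => ψ x' t) x +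
            ((d t : ℝ) : ℂ) * ψ x t) -
          ((f t : ℝ) : ℂ) * (x : ℂ) * ψ x t +
          Complex.I * ((g t : ℝ) : ℂ) * deriv (fun x' => ψ x' t) x :=
  quadratic_ansatz_solves_schrodinger_general a b c d f g J α β γ δ ε κ hα hβ hγ hδ hε hκ hsys A hA1
    hA2 y S hS ψ hψ
end

section
/- Let c, d : ℝ → ℝ be continuous, let s ∈ ℝ, and let μt, μs, αt, αs, βt, βs, γt, γs, δt, δs, εt, εs, κt, κs be real numbers with μt·μs·(γs − γt) ≠ 0. Define for x, y ∈ ℝ: G(x, y) = (4πi·μt·μs·(γs − γt))^{−1/2} · exp(−∫₀ˢ (c(τ) − 2d(τ)) dτ) · exp(i(αt·x² − αs·y² + δt·x − δs·y + κt − κs)) · exp((βt·x − βs·y + εt − εs)²/(4i(γt − γs))), where the outer square root is the principal branch. Then for every integrable function ψ : ℝ → ℂ and every x ∈ ℝ, |∫_ℝ G(x, y)·ψ(y) dy| ≤ (4π·|μt·μs·(γs − γt)|)^{−1/2} · exp(−∫₀ˢ (c(τ) − 2d(τ)) dτ) · ∫_ℝ |ψ(y)| dy; in particular the map ψ ↦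 ∫_ℝ G(·, y)ψ(y) dy satisfies the L^∞–L¹ estimate ‖U(t,s)ψ‖_∞ ≤ (4π|μt·μs·(γs − γt)|)^{−1/2}·exp(−∫₀ˢ(c − 2d))·‖ψ‖₁. -/
/-!
Since all coefficients are real, both exponential factors of `G x y` are unimodular: the first
is `exp (i·real)`, and in the second a real square is divided by `4i·(γt − γs)`, which is purely
imaginary. Hence `‖G x y‖` is the constant `(4π|μt μs (γs − γt)|)^{-1/2} · exp(−∫₀ˢ(c − 2d))`,
and the estimate is the triangle inequality for the integral.
-/

open MeasureTheory intervalIntegral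

open Complex in
theorem norm_exp_ofReal_sq_div_I_mul_ofReal (a b : ℝ) :
    ‖exp ((a : ℂ) ^ 2 / (4 * I * b))‖ = 1 := by
  have : (a : ℂ) ^ 2 / (4 * I * b) = I * ((-(a ^ 2 / (4 * b)) : ℝ) : ℂ) := by
    push_cast
    rw [mul_comm 4 I, mul_assoc, ← div_div, div_I]
    ring
  rw [this, norm_exp_I_mul_ofReal]

theorem norm_integral_mul_le_of_norm_le {α E : Type*} [MeasurableSpace α] {μ : Measure α}
    [NormedRing E] [NormedSpace ℝ E] {k ψ : α → E} {C : ℝ} (hψ : Integrable ψ μ)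
    (hk : ∀ y, ‖k y‖ ≤ C) :
    ‖∫ y, k y * ψ y ∂μ‖ ≤ C * ∫ y, ‖ψ y‖ ∂μ := by
  rw [← MeasureTheory.integral_const_mul]
  refine norm_integral_le_of_norm_le (hψ.norm.const_mul C) (.of_forall fun y => ?_)
  calc ‖k y * ψ y‖ ≤ ‖k y‖ * ‖ψ y‖ := norm_mul_le _ _
    _ ≤ C * ‖ψ y‖ := by gcongr; exact hk y

theorem composed_kernel_Linfty_L1_estimate_general
    (c d : ℝ → ℝ) (s : ℝ)
    (μt μs αt αs βt βs γt γs δt δs εt εs κt κs : ℝ)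
    (G : ℝ → ℝ → ℂ)
    (hG : G = fun x y : ℝ =>
      (4 * (Real.pi : ℂ) * Complex.I * (μt : ℂ) * (μs : ℂ) *
          ((γs : ℂ) - (γt : ℂ))) ^ (-(1 : ℂ) / 2) *
        ((Real.exp (-∫ τ in (0:ℝ)..s, (c τ - 2 * d τ)) : ℝ) : ℂ) *
        Complex.exp (Complex.I *
          ((αt * x ^ 2 - αs * y ^ 2 + δt * x - δs * y + κt - κs : ℝ) : ℂ)) *
        Complex.exp (((βt * x - βs * y + εt - εs : ℝ) : ℂ) ^ 2 /
          (4 * Complex.I * ((γt - γs : ℝ) : ℂ)))) :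
    ∀ ψ : ℝ → ℂ, Integrable ψ volume → ∀ x : ℝ,
      ‖∫ y : ℝ, G x y * ψ y‖ ≤
        (4 * Real.pi * |μt * μs * (γs - γt)|) ^ (-(1 : ℝ) / 2) *
          Real.exp (-∫ τ in (0:ℝ)..s, (c τ - 2 * d τ)) *
          ∫ y : ℝ, ‖ψ y‖ := by
  intro ψ hψ x
  refine norm_integral_mul_le_of_norm_le hψ fun y => le_of_eq ?_
  have hprefactor : ‖4 * (Real.pi : ℂ) * Complex.I * μt * μs * (γs - γt)‖ =
      4 * Real.pi * |μt * μs * (γs - γt)| := by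
    rw [← Complex.ofReal_sub]
    simp only [norm_mul, Complex.norm_I, Complex.norm_real, Real.norm_eq_abs,
      Complex.norm_ofNat, abs_mul, abs_of_pos Real.pi_pos]
    ring
  have hpow : (-(1 : ℂ) / 2) = ((-(1 : ℝ) / 2 : ℝ) : ℂ) := by push_cast; rfl
  rw [hG, norm_mul, norm_mul, norm_mul, hpow, Complex.norm_cpow_real, hprefactor,
    Complex.norm_exp_I_mul_ofReal, norm_exp_ofReal_sq_div_I_mul_ofReal, Complex.norm_real,
    Real.norm_of_nonneg (Real.exp_pos _).le, mul_one, mul_one]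

/-- The `L^∞`–`L¹` estimate for the operator `U(t, s) = U(t)U(s)⁻¹` with composed
kernel `G(x, y) = G(x, y, t, s)`: for every integrable `ψ` and every `x`,
`|∫ G(x, y)ψ(y) dy| ≤ (4π|μt·μs·(γs − γt)|)^{−1/2}·exp(−∫₀ˢ(c − 2d))·‖ψ‖₁`. -/
theorem composed_kernel_Linfty_L1_estimate
    (c d : ℝ → ℝ) (hc : Continuous c) (hd : Continuous d) (s : ℝ)
    (μt μs αt αs βt βs γt γs δt δs εt εs κt κs : ℝ)
    (hne : μt * μs * (γs - γt) ≠ 0)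
    (G : ℝ → ℝ → ℂ)
    (hG : G = fun x y : ℝ =>
      (4 * (Real.pi : ℂ) * Complex.I * (μt : ℂ) * (μs : ℂ) *
          ((γs : ℂ) - (γt : ℂ))) ^ (-(1 : ℂ) / 2) *
        ((Real.exp (-∫ τ in (0:ℝ)..s, (c τ - 2 * d τ)) : ℝ) : ℂ) *
        Complex.exp (Complex.I *
          ((αt * x ^ 2 - αs * y ^ 2 + δt * x - δs * y + κt - κs : ℝ) : ℂ)) *
        Complex.exp (((βt * x - βs * y + εt - εs : ℝ) : ℂ) ^ 2 /
          (4 * Complex.I * ((γt - γs : ℝ) : ℂ)))) :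
    ∀ ψ : ℝ → ℂ, Integrable ψ volume → ∀ x : ℝ,
      ‖∫ y : ℝ, G x y * ψ y‖ ≤
        (4 * Real.pi * |μt * μs * (γs - γt)|) ^ (-(1 : ℝ) / 2) *
          Real.exp (-∫ τ in (0:ℝ)..s, (c τ - 2 * d τ)) *
          ∫ y : ℝ, ‖ψ y‖ :=
  composed_kernel_Linfty_L1_estimate_general c d s μt μs αt αs βt βs γt γs δt δs εt εs κt κs G hG
end

section
/- Let a, c, d : ℝ → ℝ with a continuous, a(0) ≠ 0. Let μ : ℝ → ℝ be differentiable with μ(0) = 0 and μ'(0) = 2a(0), let χ : ℝ → ℝ be continuous, and let γ be differentiable on an interval J (with μ(t) ≠ 0 on J) satisfying γ'(t) + exp(−2∫₀ᵗ (c(τ) − 2d(τ)) dτ)·a(t)/μ(t)² = 0 on J. If the addition property μ(t)·μ(s)·(γ(s) − γ(t)) = χ((t + s)/2)·μ(t − s) holds for all t, s in J (with t ≠ s), then necessarily χ(t) = (1/2)·exp(−2∫₀ᵗ (c(τ) − 2d(τ)) dτ)·a(t)/a(0) for all t ∈ J. -/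
/-!
Both sides of the addition property vanish at `s = t`, so they can be differentiated in `s` there
although `χ` is merely continuous: a continuous factor times a differentiable one vanishing at the
point is differentiable there. This yields `μ(t)² γ'(t) = −2 a(0) χ(t)`, and the equation for `γ'`
turns it into the formula for `χ`.
-/

open MeasureTheory intervalIntegral Topology

theorem HasDerivAt.continuousAt_mul_of_eq_zero {𝕜 : Type*} [NontriviallyNormedField 𝕜]
    {f g : 𝕜 → 𝕜} {f' x : 𝕜}
    (hf : HasDerivAt f f' x) (hfx : f x = 0) (hg : ContinuousAt g x) :
    HasDerivAt (fun y => g y * f y) (g x * f') x := by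
  rw [hasDerivAt_iff_tendsto_slope] at hf ⊢
  have hslope : slope (fun y => g y * f y) x = fun y => g y * slope f x y := by
    ext y
    simp only [slope_def_field, hfx, mul_zero, sub_zero]
    ring
  rw [hslope]
  exact (hg.mono_left nhdsWithin_le_nhds).mul hf

theorem sq_mul_deriv_eq_of_addition_property {μ γ χ : ℝ → ℝ} {t γ' m : ℝ}
    (hγ : HasDerivAt γ γ' t) (hμt : ContinuousAt μ t) (hμ : HasDerivAt μ m 0) (hμ0 : μ 0 = 0)
    (hχ : ContinuousAt χ t)
    (hadd : ∀ᶠ s in 𝓝 t, s ≠ t → μ t * μ s * (γ s - γ t) = χ ((t + s) / 2) * μ (t - s)) :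
    μ t ^ 2 * γ' = -(χ t * m) := by
  have hlhs : HasDerivAt (fun s => μ t * μ s * (γ s - γ t)) (μ t * μ t * γ') t :=
    (hγ.sub_const (γ t)).continuousAt_mul_of_eq_zero (sub_self _)
      (continuousAt_const.mul hμt)
  have hrhs : HasDerivAt (fun s => χ ((t + s) / 2) * μ (t - s)) (χ ((t + t) / 2) * -m) t := by
    have hμ' : HasDerivAt (fun s => μ (t - s)) (-m) t := by
      have := hμ.comp_of_eq t ((hasDerivAt_id t).const_sub t) (by simp)
      exact this.congr_deriv (by ring)
    refine hμ'.continuousAt_mul_of_eq_zero (by rw [sub_self, hμ0]) ?_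
    exact hχ.comp_of_eq (by fun_prop) (by ring)
  have heq : (fun s => μ t * μ s * (γ s - γ t)) =ᶠ[𝓝 t] fun s => χ ((t + s) / 2) * μ (t - s) := by
    filter_upwards [hadd] with s hs
    rcases eq_or_ne s t with rfl | hst
    · simp [hμ0]
    · exact hs hst
  have hderiv := (hlhs.congr_of_eventuallyEq heq.symm).unique hrhs
  rw [add_self_div_two] at hderiv
  linear_combination hderiv

theorem addition_property_determines_chi_general
    (a c d : ℝ → ℝ) (ha0 : a 0 ≠ 0)
    (μ : ℝ → ℝ) (hμdiff : Differentiable ℝ μ)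
    (hμ0 : μ 0 = 0) (hμ'0 : deriv μ 0 = 2 * a 0)
    (χ : ℝ → ℝ) (hχ : Continuous χ)
    (J : Set ℝ) (hJopen : IsOpen J)
    (hμne : ∀ t ∈ J, μ t ≠ 0)
    (γ : ℝ → ℝ) (hγdiff : ∀ t ∈ J, DifferentiableAt ℝ γ t)
    (hγ : ∀ t ∈ J,
      deriv γ t +
        Real.exp (-2 * ∫ τ in (0:ℝ)..t, (c τ - 2 * d τ)) * a t / μ t ^ 2 = 0)
    (hadd : ∀ t ∈ J, ∀ s ∈ J, t ≠ s →
      μ t * μ s * (γ s - γ t) = χ ((t + s) / 2) * μ (t - s)) :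
    ∀ t ∈ J, χ t =
      1 / 2 * Real.exp (-2 * ∫ τ in (0:ℝ)..t, (c τ - 2 * d τ)) * a t / a 0 := by
  intro t ht
  have hμ : HasDerivAt μ (2 * a 0) 0 := hμ'0 ▸ (hμdiff 0).hasDerivAt
  have hadd_near : ∀ᶠ s in 𝓝 t, s ≠ t →
      μ t * μ s * (γ s - γ t) = χ ((t + s) / 2) * μ (t - s) := by
    filter_upwards [hJopen.mem_nhds ht] with s hs hst using hadd t ht s hs hst.symm
  have key := sq_mul_deriv_eq_of_addition_property (hγdiff t ht).hasDerivAt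
    (hμdiff t).continuousAt hμ hμ0 hχ.continuousAt hadd_near
  have hγt := hγ t ht
  set E := Real.exp (-2 * ∫ τ in (0:ℝ)..t, (c τ - 2 * d τ))
  have hEa : E * a t = -(μ t ^ 2 * deriv γ t) := by
    field_simp [hμne t ht] at hγt
    linear_combination hγt
  rw [eq_div_iff ha0]
  linear_combination (key - hEa) / 2

/-- If the addition property `μ(t)μ(s)(γ(s) − γ(t)) = χ((t+s)/2)·μ(t − s)` holds on
an interval `J`, where `μ(0) = 0`, `μ'(0) = 2a(0) ≠ 0` and
`γ' + exp(−2∫₀ᵗ(c − 2d))·a/μ² = 0`, then necessarily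
`χ(t) = (1/2)·exp(−2∫₀ᵗ(c − 2d))·a(t)/a(0)` on `J`. -/
theorem addition_property_determines_chi
    (a c d : ℝ → ℝ) (ha : Continuous a) (ha0 : a 0 ≠ 0)
    (μ : ℝ → ℝ) (hμdiff : Differentiable ℝ μ)
    (hμ0 : μ 0 = 0) (hμ'0 : deriv μ 0 = 2 * a 0)
    (χ : ℝ → ℝ) (hχ : Continuous χ)
    (J : Set ℝ) (hJopen : IsOpen J) (hJconn : J.OrdConnected)
    (hμne : ∀ t ∈ J, μ t ≠ 0)
    (γ : ℝ → ℝ) (hγdiff : ∀ t ∈ J, DifferentiableAt ℝ γ t)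
    (hγ : ∀ t ∈ J,
      deriv γ t +
        Real.exp (-2 * ∫ τ in (0:ℝ)..t, (c τ - 2 * d τ)) * a t / μ t ^ 2 = 0)
    (hadd : ∀ t ∈ J, ∀ s ∈ J, t ≠ s →
      μ t * μ s * (γ s - γ t) = χ ((t + s) / 2) * μ (t - s)) :
    ∀ t ∈ J, χ t =
      1 / 2 * Real.exp (-2 * ∫ τ in (0:ℝ)..t, (c τ - 2 * d τ)) * a t / a 0 :=
  addition_property_determines_chi_general a c d ha0 μ hμdiff hμ0 hμ'0 χ hχ J hJopen hμne γ hγdiff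
    hγ hadd
end
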